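/- arXiv:2405.16223 — 5 statements merged into one kernel-verified Lean document; each statement's English description precedes it below -/
import Mathlib

section
/- Let 𝕌 be a compact convex subset of ℝ^m and let v : ℝ^d → 𝕌 be a Borel measurable map (a deterministic stationary Markov policy). Then there exists a sequence of Lipschitz continuous maps w_k : ℝ^d → 𝕌 such that for every f ∈ L¹(ℝ^d) ∩ L²(ℝ^d) and every bounded continuous function g : ℝ^d × 𝕌 → ℝ, one has ∫_{ℝ^d} f(x) g(x, w_k(x)) dx → ∫_{ℝ^d} f(x) g(x, v(x)) dx as k → ∞. (Denseness of Lipschitz policies in the Borkar topology.) -/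
open MeasureTheory Filter Topology Set Metric
open scoped Convolution

/-- Denseness of Lipschitz continuous deterministic stationary Markov policies in the
Borkar topology: any Borel measurable policy `v : ℝ^d → 𝕌` (with `𝕌 ⊆ ℝ^m` compact
convex) can be approximated by a sequence of Lipschitz policies `w k` so that
`∫ f(x) g(x, w k x) dx → ∫ f(x) g(x, v x) dx` for all `f ∈ L¹ ∩ L²` and all bounded
continuous `g : ℝ^d × 𝕌 → ℝ`. -/
theorem lipschitz_policies_dense_borkar
    (d m : ℕ) (U : Set (EuclideanSpace ℝ (Fin m)))
    (hUcomp : IsCompact U) (hUconv : Convex ℝ U)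
    (v : EuclideanSpace ℝ (Fin d) → EuclideanSpace ℝ (Fin m))
    (hv : Measurable v) (hvU : ∀ x, v x ∈ U) :
    ∃ w : ℕ → EuclideanSpace ℝ (Fin d) → EuclideanSpace ℝ (Fin m),
      (∀ k, ∃ K : NNReal, LipschitzWith K (w k)) ∧
      (∀ k x, w k x ∈ U) ∧
      (∀ f : EuclideanSpace ℝ (Fin d) → ℝ,
        Integrable f volume → MemLp f 2 volume →
        ∀ g : EuclideanSpace ℝ (Fin d) → EuclideanSpace ℝ (Fin m) → ℝ,
          ContinuousOn (fun p : EuclideanSpace ℝ (Fin d) × EuclideanSpace ℝ (Fin m) =>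
            g p.1 p.2) (Set.univ ×ˢ U) →
          (∃ C : ℝ, ∀ x, ∀ u ∈ U, |g x u| ≤ C) →
          Tendsto (fun k => ∫ x, f x * g x (w k x))
            atTop (𝓝 (∫ x, f x * g x (v x)))) := by
  classical
  obtain ⟨R, hR⟩ : ∃ R : ℝ, ∀ u ∈ U, ‖u‖ ≤ R := by
    obtain ⟨R, hRb⟩ := hUcomp.isBounded.subset_closedBall 0
    exact ⟨R, fun u hu => by simpa [mem_closedBall, dist_zero_right] using hRb hu⟩
  have hR0 : 0 ≤ R := le_trans (norm_nonneg _) (hR _ (hvU 0))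
  have hvm : MemLp v ⊤ volume :=
    memLp_top_of_bound hv.aestronglyMeasurable R (ae_of_all _ fun x => hR _ (hvU x))
  have hvloc : LocallyIntegrable v volume := hvm.locallyIntegrable le_top
  have hrpos : ∀ k : ℕ, (0:ℝ) < ((k:ℝ)+1)⁻¹ := fun k => by positivity
  set φ : ∀ _ : ℕ, ContDiffBump (0 : EuclideanSpace ℝ (Fin d)) :=
    fun k => ⟨((k:ℝ)+1)⁻¹, 2*((k:ℝ)+1)⁻¹, hrpos k, by linarith [hrpos k]⟩ with hφdef
  set W : ℕ → EuclideanSpace ℝ (Fin d) → EuclideanSpace ℝ (Fin m) :=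
    fun k => (φ k).normed volume ⋆[ContinuousLinearMap.lsmul ℝ ℝ, volume] v with hWdef
  have hswap : ∀ k x, W k x = ∫ t, (φ k).normed volume (x - t) • v t := by
    intro k x
    show ((φ k).normed volume ⋆[ContinuousLinearMap.lsmul ℝ ℝ, volume] v) x = _
    rw [convolution_eq_swap]
    simp [ContinuousLinearMap.lsmul_apply]
  have hφcont : ∀ k (x : EuclideanSpace ℝ (Fin d)),
      Continuous (fun t => (φ k).normed volume (x - t)) :=
    fun k x => ((φ k).continuous_normed).comp (continuous_const.sub continuous_id)
  have hφint : ∀ k (x : EuclideanSpace ℝ (Fin d)),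
      Integrable (fun t => (φ k).normed volume (x - t)) volume := by
    intro k x
    apply (hφcont k x).integrable_of_hasCompactSupport
    exact ((φ k).hasCompactSupport_normed).comp_homeomorph (Homeomorph.subLeft x)
  have hint : ∀ k (x : EuclideanSpace ℝ (Fin d)),
      Integrable (fun t => (φ k).normed volume (x - t) • v t) volume :=
    fun k x => (hφint k x).smul_of_top_left hvm
  -- membership
  have hWU : ∀ k x, W k x ∈ U := by
    intro k x
    have hnn : ∀ t, 0 ≤ (φ k).normed volume (x - t) := fun t => (φ k).nonneg_normed _
    set ρ : EuclideanSpace ℝ (Fin d) → NNReal :=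
      fun t => Real.toNNReal ((φ k).normed volume (x - t)) with hρ
    have hρm : Measurable ρ := (hφcont k x).measurable.real_toNNReal
    have hcoe : ∀ t, ((ρ t : ℝ)) = (φ k).normed volume (x - t) :=
      fun t => Real.coe_toNNReal _ (hnn t)
    set μ' := volume.withDensity (fun t => (ρ t : ENNReal)) with hμ'
    have hprob : IsProbabilityMeasure μ' := by
      constructor
      rw [hμ', withDensity_apply _ MeasurableSet.univ, setLIntegral_univ]
      have heq : ∀ t, ((ρ t : ENNReal)) = ENNReal.ofReal ((φ k).normed volume (x - t)) := by
        intro t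
        rw [← hcoe t, ENNReal.ofReal_coe_nnreal]
      simp_rw [heq]
      rw [← ofReal_integral_eq_lintegral_ofReal (hφint k x) (ae_of_all _ hnn),
        integral_sub_left_eq_self ((φ k).normed volume) volume x,
        (φ k).integral_normed, ENNReal.ofReal_one]
    have hvint' : Integrable v μ' := by
      rw [hμ', integrable_withDensity_iff_integrable_smul hρm]
      refine (hint k x).congr (ae_of_all _ fun t => ?_)
      simp only [NNReal.smul_def, hcoe]
    have hmem := hUconv.integral_mem hUcomp.isClosed (ae_of_all _ fun t => hvU t) hvint'
    rw [hμ', integral_withDensity_eq_integral_smul hρm] at hmem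
    have : W k x = ∫ t, ρ t • v t := by
      rw [hswap k x]
      refine integral_congr_ae (ae_of_all _ fun t => ?_)
      simp only [NNReal.smul_def, hcoe]
    rw [this]
    exact hmem
  -- Lipschitz
  have hlip : ∀ k, ∃ K : NNReal, LipschitzWith K (W k) := by
    intro k
    obtain ⟨L, hL⟩ : ∃ L : NNReal, LipschitzWith L ((φ k).normed volume) := by
      have hcd : ContDiff ℝ 1 ((φ k).normed volume) := (φ k).contDiff_normed
      have hdiff : Differentiable ℝ ((φ k).normed volume) := hcd.differentiable one_ne_zero
      have hfc : Continuous (fderiv ℝ ((φ k).normed volume)) := hcd.continuous_fderiv one_ne_zero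
      have hcs : HasCompactSupport (fderiv ℝ ((φ k).normed volume)) :=
        ((φ k).hasCompactSupport_normed).fderiv (𝕜 := ℝ)
      obtain ⟨C, hC⟩ := hfc.bounded_above_of_compact_support hcs
      have hC0 : 0 ≤ C := le_trans (norm_nonneg _) (hC 0)
      refine ⟨C.toNNReal, lipschitzWith_of_nnnorm_fderiv_le hdiff fun z => ?_⟩
      rw [Real.le_toNNReal_iff_coe_le hC0, coe_nnnorm]
      exact hC z
    set rO := (φ k).rOut with hrO
    set Vol := (volume (closedBall (0 : EuclideanSpace ℝ (Fin d)) rO)).toReal with hVol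
    have hVol0 : 0 ≤ Vol := ENNReal.toReal_nonneg
    refine ⟨Real.toNNReal ((L : ℝ) * R * (2 * Vol)),
      LipschitzWith.of_dist_le_mul fun x y => ?_⟩
    rw [Real.coe_toNNReal _ (by positivity), dist_eq_norm]
    have hsub : W k x - W k y =
        ∫ t, ((φ k).normed volume (x - t) - (φ k).normed volume (y - t)) • v t := by
      rw [hswap, hswap, ← integral_sub (hint k x) (hint k y)]
      simp_rw [sub_smul]
    rw [hsub]
    set s : Set (EuclideanSpace ℝ (Fin d)) := closedBall x rO ∪ closedBall y rO with hs
    have hintdiff : Integrable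
        (fun t => ((φ k).normed volume (x - t) - (φ k).normed volume (y - t)) • v t)
        volume := by
      have := (hint k x).sub (hint k y)
      refine this.congr (ae_of_all _ fun t => ?_)
      simp [sub_smul]
    have hker : ∀ z : EuclideanSpace ℝ (Fin d), ∀ t, t ∉ closedBall z rO →
        (φ k).normed volume (z - t) = 0 := by
      intro z t htz
      by_contra h
      apply htz
      have hm := Function.mem_support.mpr h
      rw [(φ k).support_normed_eq] at hm
      simp only [Metric.mem_ball, dist_zero_right] at hm
      rw [Metric.mem_closedBall, dist_comm, dist_eq_norm]
      exact hm.le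
    have hzero : ∀ t ∉ s,
        (((φ k).normed volume (x - t) - (φ k).normed volume (y - t)) • v t) = 0 := by
      intro t ht
      rw [hs, Set.mem_union, not_or] at ht
      rw [hker x t ht.1, hker y t ht.2, sub_zero, zero_smul]
    rw [← setIntegral_eq_integral_of_forall_compl_eq_zero hzero]
    have hsfin : volume s < ⊤ :=
      lt_of_le_of_lt (measure_union_le _ _)
        (ENNReal.add_lt_top.mpr ⟨measure_closedBall_lt_top, measure_closedBall_lt_top⟩)
    have hb : ∀ t ∈ s,
        ‖((φ k).normed volume (x - t) - (φ k).normed volume (y - t)) • v t‖ ≤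
          (L : ℝ) * dist x y * R := by
      intro t _
      rw [norm_smul]
      refine mul_le_mul ?_ (hR _ (hvU t)) (norm_nonneg _) (by positivity)
      calc ‖(φ k).normed volume (x - t) - (φ k).normed volume (y - t)‖
          = dist ((φ k).normed volume (x - t)) ((φ k).normed volume (y - t)) :=
            (dist_eq_norm _ _).symm
        _ ≤ (L : ℝ) * dist (x - t) (y - t) := hL.dist_le_mul _ _
        _ = (L : ℝ) * dist x y := by rw [dist_sub_right]
    have hmain := norm_setIntegral_le_of_norm_le_const hsfin hb
    refine le_trans hmain ?_
    have hvs : (volume s).toReal ≤ 2 * Vol := by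
      have h1 : volume s ≤ volume (closedBall x rO) + volume (closedBall y rO) :=
        measure_union_le _ _
      have hx' : volume (closedBall x rO) =
          volume (closedBall (0 : EuclideanSpace ℝ (Fin d)) rO) :=
        Measure.addHaar_closedBall_center _ _ _
      have hy' : volume (closedBall y rO) =
          volume (closedBall (0 : EuclideanSpace ℝ (Fin d)) rO) :=
        Measure.addHaar_closedBall_center _ _ _
      rw [hx', hy'] at h1
      have h2 : (volume s).toReal ≤
          (volume (closedBall (0 : EuclideanSpace ℝ (Fin d)) rO) +
            volume (closedBall (0 : EuclideanSpace ℝ (Fin d)) rO)).toReal := by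
        apply ENNReal.toReal_mono _ h1
        exact (ENNReal.add_lt_top.mpr ⟨measure_closedBall_lt_top, measure_closedBall_lt_top⟩).ne
      rw [ENNReal.toReal_add measure_closedBall_lt_top.ne measure_closedBall_lt_top.ne] at h2
      rw [hVol]
      linarith
    have hd0 : (0:ℝ) ≤ dist x y := dist_nonneg
    have hL0 : (0:ℝ) ≤ (L:ℝ) := L.coe_nonneg
    calc (L : ℝ) * dist x y * R * (volume s).toReal
        ≤ (L : ℝ) * dist x y * R * (2 * Vol) := by
          apply mul_le_mul_of_nonneg_left hvs (by positivity)
      _ = (L : ℝ) * R * (2 * Vol) * dist x y := by ring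
  -- a.e. convergence
  have hae : ∀ᵐ x ∂(volume : Measure (EuclideanSpace ℝ (Fin d))),
      Tendsto (fun k => W k x) atTop (𝓝 (v x)) := by
    have hφr : Tendsto (fun k => (φ k).rOut) atTop (𝓝 0) := by
      have h2 : Tendsto (fun n : ℕ => 2 * (1 / ((n:ℝ) + 1))) atTop (𝓝 (2 * 0)) :=
        tendsto_one_div_add_atTop_nhds_zero_nat.const_mul 2
      simpa [one_div] using h2
    exact ContDiffBump.ae_convolution_tendsto_right_of_locallyIntegrable hφr
      (Eventually.of_forall fun k => le_rfl) hvloc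
  refine ⟨W, hlip, hWU, ?_⟩
  rintro f hf1 hf2 g hgc ⟨C, hC⟩
  have hgmeas : ∀ k, AEStronglyMeasurable (fun x => f x * g x (W k x)) volume := by
    intro k
    have hWc : Continuous (W k) := (hlip k).choose_spec.continuous
    have hc : Continuous (fun x => g x (W k x)) :=
      hgc.comp_continuous (continuous_id.prodMk hWc) (fun x => ⟨mem_univ _, hWU k x⟩)
    exact hf1.aestronglyMeasurable.mul hc.aestronglyMeasurable
  apply tendsto_integral_of_dominated_convergence (fun x => |f x| * C) hgmeas
    (hf1.abs.mul_const C)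
  · intro k
    apply ae_of_all
    intro x
    have : ‖f x * g x (W k x)‖ = |f x| * |g x (W k x)| := by
      rw [Real.norm_eq_abs, abs_mul]
    rw [this]
    exact mul_le_mul_of_nonneg_left (hC x _ (hWU k x)) (abs_nonneg _)
  · filter_upwards [hae] with x hx
    have hvx : Tendsto (fun k => ((x, W k x) :
        EuclideanSpace ℝ (Fin d) × EuclideanSpace ℝ (Fin m))) atTop
        (𝓝[Set.univ ×ˢ U] (x, v x)) := by
      apply tendsto_nhdsWithin_of_tendsto_nhds_of_eventually_within
      · exact tendsto_const_nhds.prodMk_nhds hx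
      · exact Eventually.of_forall fun k => ⟨mem_univ _, hWU k x⟩
    have := ((hgc (x, v x) ⟨mem_univ _, hvU x⟩).tendsto).comp hvx
    exact tendsto_const_nhds.mul this
end

section
/- Let 𝕌 be a compact convex subset of ℝ^m and let v : ℝ^d → 𝕌 be a Borel measurable map. Then there exists a sequence of continuous maps ṽ_n : ℝ^d → 𝕌 such that for every f ∈ L¹(ℝ^d) ∩ L²(ℝ^d) and every bounded continuous function g : ℝ^d × 𝕌 → ℝ, one has ∫_{ℝ^d} f(x) g(x, ṽ_n(x)) dx → ∫_{ℝ^d} f(x) g(x, v(x)) dx as n → ∞. (Continuous approximation step, via Lusin's theorem and Tietze's extension theorem.) -/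
open MeasureTheory Filter Topology Set
open scoped Convolution ENNReal NNReal

/-- Denseness of Lipschitz continuous deterministic stationary Markov policies in the
Borkar topology: any Borel measurable policy `v : ℝ^d → 𝕌` (with `𝕌 ⊆ ℝ^m` compact
convex) can be approximated by a sequence of continuous policies `w k` so that
`∫ f(x) g(x, w k x) dx → ∫ f(x) g(x, v x) dx` for all `f ∈ L¹ ∩ L²` and all bounded
continuous `g : ℝ^d × 𝕌 → ℝ`. -/
theorem continuous_policies_dense_borkar
    (d m : ℕ) (U : Set (EuclideanSpace ℝ (Fin m)))
    (hUcomp : IsCompact U) (hUconv : Convex ℝ U)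
    (v : EuclideanSpace ℝ (Fin d) → EuclideanSpace ℝ (Fin m))
    (hv : Measurable v) (hvU : ∀ x, v x ∈ U) :
    ∃ w : ℕ → EuclideanSpace ℝ (Fin d) → EuclideanSpace ℝ (Fin m),
      (∀ k, Continuous (w k)) ∧
      (∀ k x, w k x ∈ U) ∧
      (∀ f : EuclideanSpace ℝ (Fin d) → ℝ,
        Integrable f volume → MemLp f 2 volume →
        ∀ g : EuclideanSpace ℝ (Fin d) → EuclideanSpace ℝ (Fin m) → ℝ,
          ContinuousOn (fun p : EuclideanSpace ℝ (Fin d) × EuclideanSpace ℝ (Fin m) =>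
            g p.1 p.2) (Set.univ ×ˢ U) →
          (∃ C : ℝ, ∀ x, ∀ u ∈ U, |g x u| ≤ C) →
          Tendsto (fun k => ∫ x, f x * g x (w k x))
            atTop (𝓝 (∫ x, f x * g x (v x)))) := by
  classical
  obtain ⟨R, hR⟩ : ∃ R, U ⊆ Metric.closedBall 0 R := hUcomp.isBounded.subset_closedBall 0
  have hvnorm : ∀ x, ‖v x‖ ≤ R := fun x => mem_closedBall_zero_iff.1 (hR (hvU x))
  -- v is locally integrable
  have hvloc : LocallyIntegrable v volume := by
    rw [locallyIntegrable_iff]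
    intro K hK
    haveI : Fact (volume K < ⊤) := ⟨hK.measure_lt_top⟩
    refine Integrable.mono' (integrable_const R)
      (hv.aestronglyMeasurable.restrict) ?_
    exact Eventually.of_forall fun x => hvnorm x
  -- bump functions
  let φ : ℕ → ContDiffBump (0 : EuclideanSpace ℝ (Fin d)) := fun k =>
    ⟨((k : ℝ) + 1)⁻¹, 2 * ((k : ℝ) + 1)⁻¹, by positivity, by
      have : (0:ℝ) < ((k : ℝ) + 1)⁻¹ := by positivity
      linarith⟩
  let w : ℕ → EuclideanSpace ℝ (Fin d) → EuclideanSpace ℝ (Fin m) := fun k =>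
    (φ k).normed volume ⋆[ContinuousLinearMap.lsmul ℝ ℝ, volume] v
  have hw : ∀ k, Continuous (w k) := fun k =>
    ((φ k).hasCompactSupport_normed).continuous_convolution_left _
      (φ k).continuous_normed hvloc
  have hwU : ∀ k x, w k x ∈ U := by
    intro k x
    have hρ_meas : Measurable fun t => ((φ k).normed volume t).toNNReal :=
      ((φ k).continuous_normed.measurable).real_toNNReal
    set μk : Measure (EuclideanSpace ℝ (Fin d)) :=
      volume.withDensity (fun t => (((φ k).normed volume t).toNNReal : ℝ≥0∞)) with hμk
    have hcoe : ∀ t, ((((φ k).normed volume t).toNNReal : ℝ≥0∞)) =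
        ENNReal.ofReal ((φ k).normed volume t) := fun t => rfl
    have hprob : IsProbabilityMeasure μk := by
      constructor
      rw [hμk, withDensity_apply _ MeasurableSet.univ, Measure.restrict_univ]
      simp_rw [hcoe]
      rw [← ofReal_integral_eq_lintegral_ofReal ((φ k).integrable_normed)
        (Eventually.of_forall fun t => (φ k).nonneg_normed t)]
      rw [(φ k).integral_normed]
      simp
    have hint : Integrable (fun t => v (x - t)) μk := by
      refine Integrable.mono' (integrable_const R) ?_
        (Eventually.of_forall fun t => hvnorm _)
      exact (hv.comp (measurable_const.sub measurable_id)).aestronglyMeasurable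
    have hval : w k x = ∫ t, v (x - t) ∂μk := by
      rw [hμk, integral_withDensity_eq_integral_smul hρ_meas]
      show (∫ t, ContinuousLinearMap.lsmul ℝ ℝ ((φ k).normed volume t) (v (x - t))) = _
      congr 1 with t
      rw [ContinuousLinearMap.lsmul_apply, NNReal.smul_def,
        Real.coe_toNNReal _ ((φ k).nonneg_normed t)]
    rw [hval]
    exact hUconv.integral_mem hUcomp.isClosed
      (Eventually.of_forall fun t => hvU _) hint
  -- a.e. convergence
  have hrOut : Tendsto (fun k => (φ k).rOut) atTop (𝓝 0) := by
    have h1 : Tendsto (fun k : ℕ => ((k : ℝ) + 1)⁻¹) atTop (𝓝 0) := by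
      simpa [one_div] using tendsto_one_div_add_atTop_nhds_zero_nat (𝕜 := ℝ)
    have := h1.const_mul (2 : ℝ)
    simpa using this
  have hae : ∀ᵐ x ∂(volume : Measure (EuclideanSpace ℝ (Fin d))),
      Tendsto (fun k => w k x) atTop (𝓝 (v x)) := by
    refine ContDiffBump.ae_convolution_tendsto_right_of_locallyIntegrable
      (K := 2) hrOut ?_ hvloc
    exact Eventually.of_forall fun k => le_of_eq (by ring)
  refine ⟨w, hw, hwU, ?_⟩
  intro f hf1 _hf2 g hgc ⟨C, hC⟩
  have hgk : ∀ k, Continuous fun x => g x (w k x) := by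
    intro k
    exact hgc.comp_continuous (continuous_id.prodMk (hw k))
      (fun x => ⟨mem_univ _, hwU k x⟩)
  refine tendsto_integral_of_dominated_convergence (fun x => |f x| * C)
    (fun k => hf1.aestronglyMeasurable.mul (hgk k).aestronglyMeasurable)
    (hf1.abs.mul_const C) ?_ ?_
  · intro k
    refine Eventually.of_forall fun x => ?_
    rw [Real.norm_eq_abs, abs_mul]
    exact mul_le_mul_of_nonneg_left (hC x _ (hwU k x)) (abs_nonneg _)
  · filter_upwards [hae] with x hx
    have hmem : Tendsto (fun k => ((x, w k x) :
        EuclideanSpace ℝ (Fin d) × EuclideanSpace ℝ (Fin m))) atTop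
        (𝓝[Set.univ ×ˢ U] (x, v x)) := by
      rw [tendsto_nhdsWithin_iff]
      exact ⟨tendsto_const_nhds.prodMk_nhds hx,
        Eventually.of_forall fun k => ⟨mem_univ _, hwU k x⟩⟩
    have := (hgc (x, v x) ⟨mem_univ _, hvU x⟩).tendsto.comp hmem
    exact this.const_mul (f x)
end

section
/- Let 𝕌 be a compact subset of ℝ^m and let v_n, v : ℝ^d → 𝕌 be Borel measurable maps such that for every R > 0 the Lebesgue measure of {x ∈ B_R : v_n(x) ≠ v(x)} tends to 0 as n → ∞. Then for every f ∈ L¹(ℝ^d) ∩ L²(ℝ^d) and every bounded continuous function g : ℝ^d × 𝕌 → ℝ, one has ∫_{ℝ^d} f(x) g(x, v_n(x)) dx → ∫_{ℝ^d} f(x) g(x, v(x)) dx as n → ∞. (Local convergence in measure of policies implies convergence in the Borkar topology.) -/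
open MeasureTheory Filter Topology Set

/-- Local convergence in measure of policies implies convergence in the Borkar
topology: if `𝕌 ⊆ ℝ^m` is compact, `v n, v : ℝ^d → 𝕌` are Borel measurable and for
every `R > 0` the Lebesgue measure of `{x ∈ B_R : v n x ≠ v x}` tends to `0`, then
`∫ f(x) g(x, v n x) dx → ∫ f(x) g(x, v x) dx` for all `f ∈ L¹ ∩ L²` and all bounded
continuous `g : ℝ^d × 𝕌 → ℝ`. -/
theorem local_convergence_in_measure_implies_borkar
    (d m : ℕ) (U : Set (EuclideanSpace ℝ (Fin m))) (hUcomp : IsCompact U)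
    (vn : ℕ → EuclideanSpace ℝ (Fin d) → EuclideanSpace ℝ (Fin m))
    (v : EuclideanSpace ℝ (Fin d) → EuclideanSpace ℝ (Fin m))
    (hvn : ∀ n, Measurable (vn n)) (hv : Measurable v)
    (hvnU : ∀ n x, vn n x ∈ U) (hvU : ∀ x, v x ∈ U)
    (hmeas : ∀ R : ℝ, 0 < R →
      Tendsto (fun n =>
          volume {x | x ∈ Metric.ball (0 : EuclideanSpace ℝ (Fin d)) R ∧ vn n x ≠ v x})
        atTop (𝓝 0)) :
    ∀ f : EuclideanSpace ℝ (Fin d) → ℝ,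
      Integrable f volume → MemLp f 2 volume →
      ∀ g : EuclideanSpace ℝ (Fin d) → EuclideanSpace ℝ (Fin m) → ℝ,
        ContinuousOn (fun p : EuclideanSpace ℝ (Fin d) × EuclideanSpace ℝ (Fin m) =>
          g p.1 p.2) (Set.univ ×ˢ U) →
        (∃ C : ℝ, ∀ x, ∀ u ∈ U, |g x u| ≤ C) →
        Tendsto (fun n => ∫ x, f x * g x (vn n x))
          atTop (𝓝 (∫ x, f x * g x (v x))) := by
  intro f hf _hf2 g hg hgbdd
  obtain ⟨C, hC⟩ := hgbdd
  have hC0 : 0 ≤ C := le_trans (abs_nonneg _) (hC 0 (v 0) (hvU 0))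
  -- measurability of compositions
  have key : ∀ (w : EuclideanSpace ℝ (Fin d) → EuclideanSpace ℝ (Fin m)),
      Measurable w → (∀ x, w x ∈ U) → Measurable (fun x => g x (w x)) := by
    intro w hw hwU
    have hφ : Measurable (fun x => (⟨(x, w x), by simp [hwU x]⟩ :
        (Set.univ ×ˢ U : Set (EuclideanSpace ℝ (Fin d) × EuclideanSpace ℝ (Fin m))))) :=
      (measurable_id.prodMk hw).subtype_mk
    have hgr : Continuous ((Set.univ ×ˢ U).restrict
        (fun p : EuclideanSpace ℝ (Fin d) × EuclideanSpace ℝ (Fin m) => g p.1 p.2)) :=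
      ContinuousOn.restrict hg
    exact hgr.measurable.comp hφ
  -- integrability of f * (g ∘ w)
  have hint : ∀ (w : EuclideanSpace ℝ (Fin d) → EuclideanSpace ℝ (Fin m)),
      Measurable w → (∀ x, w x ∈ U) →
      Integrable (fun x => f x * g x (w x)) volume := by
    intro w hw hwU
    refine Integrable.mono (hf.const_mul C) ?_ ?_
    · exact (hf.aestronglyMeasurable.mul (key w hw hwU).aestronglyMeasurable)
    · refine Filter.Eventually.of_forall fun x => ?_
      simp only [Real.norm_eq_abs, abs_mul]
      calc |f x| * |g x (w x)| ≤ |f x| * C := by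
            exact mul_le_mul_of_nonneg_left (hC x (w x) (hwU x)) (abs_nonneg _)
        _ ≤ |C| * |f x| := by rw [abs_of_nonneg hC0]; ring_nf; exact le_rfl
  set F : EuclideanSpace ℝ (Fin d) → ℝ := fun x => 2 * C * |f x| with hFdef
  have hFnn : ∀ x, 0 ≤ F x := fun x => by positivity
  have hFint : Integrable F volume := (hf.abs).const_mul (2 * C)
  have hAmeas : ∀ n, MeasurableSet {x | vn n x ≠ v x} :=
    fun n => (measurableSet_eq_fun (hvn n) hv).compl
  -- main: difference tends to 0
  have main : Tendsto (fun n => ∫ x, (f x * g x (vn n x) - f x * g x (v x))) atTop (𝓝 0) := by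
    rw [NormedAddCommGroup.tendsto_nhds_zero]
    intro ε hε
    -- choose radius R with small tail
    obtain ⟨R, hR1, hRtail⟩ : ∃ R : ℕ, 1 ≤ R ∧
        ∫ x in (Metric.ball (0 : EuclideanSpace ℝ (Fin d)) (R : ℝ))ᶜ, F x < ε / 2 := by
      have hUu : (⋃ k : ℕ, Metric.ball (0 : EuclideanSpace ℝ (Fin d)) (k : ℝ)) = Set.univ := by
        ext x
        simp only [Set.mem_iUnion, Metric.mem_ball, Set.mem_univ, iff_true]
        obtain ⟨k, hk⟩ := exists_nat_gt (dist x 0)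
        exact ⟨k, hk⟩
      have hmono : Monotone (fun k : ℕ => Metric.ball (0 : EuclideanSpace ℝ (Fin d)) (k : ℝ)) :=
        fun a b hab => Metric.ball_subset_ball (by exact_mod_cast hab)
      have htend : Tendsto (fun k : ℕ =>
          ∫ x in Metric.ball (0 : EuclideanSpace ℝ (Fin d)) (k : ℝ), F x) atTop
          (𝓝 (∫ x, F x)) := by
        have := MeasureTheory.tendsto_setIntegral_of_monotone
          (fun k : ℕ => (Metric.isOpen_ball).measurableSet) hmono
          (by rw [hUu]; exact hFint.integrableOn)
        rwa [hUu, MeasureTheory.setIntegral_univ] at this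
      have htend0 : Tendsto (fun k : ℕ =>
          ∫ x in (Metric.ball (0 : EuclideanSpace ℝ (Fin d)) (k : ℝ))ᶜ, F x) atTop (𝓝 0) := by
        have heq : ∀ k : ℕ, ∫ x in (Metric.ball (0 : EuclideanSpace ℝ (Fin d)) (k : ℝ))ᶜ, F x
            = (∫ x, F x) - ∫ x in Metric.ball (0 : EuclideanSpace ℝ (Fin d)) (k : ℝ), F x := by
          intro k
          have := MeasureTheory.integral_add_compl
            (Metric.isOpen_ball (x := (0 : EuclideanSpace ℝ (Fin d))) (ε := (k:ℝ))).measurableSet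
            hFint
          linarith
        simp only [heq]
        have hc : Tendsto (fun _ : ℕ => ∫ x, F x) atTop (𝓝 (∫ x, F x)) := tendsto_const_nhds
        simpa using hc.sub htend
      have hev : ∀ᶠ k : ℕ in atTop,
          ∫ x in (Metric.ball (0 : EuclideanSpace ℝ (Fin d)) (k : ℝ))ᶜ, F x < ε / 2 :=
        htend0.eventually (eventually_lt_nhds (by positivity : (0:ℝ) < ε / 2)) |>.mono
          (fun k hk => hk)
      obtain ⟨R, hR⟩ := (hev.and (eventually_ge_atTop 1)).exists
      exact ⟨R, hR.2, hR.1⟩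
    have hRpos : (0 : ℝ) < (R : ℝ) := by exact_mod_cast hR1
    set s : ℕ → Set (EuclideanSpace ℝ (Fin d)) :=
      fun n => {x | x ∈ Metric.ball (0 : EuclideanSpace ℝ (Fin d)) (R : ℝ) ∧ vn n x ≠ v x}
      with hsdef
    have hsmeas : ∀ n, MeasurableSet (s n) :=
      fun n => (Metric.isOpen_ball.measurableSet).inter (hAmeas n)
    have h1 : Tendsto (fun n => ∫ x in s n, F x) atTop (𝓝 0) :=
      hFint.tendsto_setIntegral_nhds_zero (hmeas (R : ℝ) hRpos)
    have h1ev : ∀ᶠ n in atTop, ∫ x in s n, F x < ε / 2 :=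
      h1.eventually (eventually_lt_nhds (by positivity : (0:ℝ) < ε / 2))
    filter_upwards [h1ev] with n hn
    -- pointwise bound
    have hptw : ∀ x, ‖f x * g x (vn n x) - f x * g x (v x)‖ ≤
        Set.indicator (s n) F x +
        Set.indicator (Metric.ball (0 : EuclideanSpace ℝ (Fin d)) (R : ℝ))ᶜ F x := by
      intro x
      by_cases hx : vn n x = v x
      · rw [hx]
        simp only [sub_self, norm_zero]
        exact add_nonneg (Set.indicator_nonneg (fun y _ => hFnn y) x)
          (Set.indicator_nonneg (fun y _ => hFnn y) x)
      · have hbound : ‖f x * g x (vn n x) - f x * g x (v x)‖ ≤ F x := by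
          rw [Real.norm_eq_abs, ← mul_sub, abs_mul]
          calc |f x| * |g x (vn n x) - g x (v x)|
              ≤ |f x| * (|g x (vn n x)| + |g x (v x)|) :=
                mul_le_mul_of_nonneg_left (abs_sub _ _) (abs_nonneg _)
            _ ≤ |f x| * (C + C) := by
                refine mul_le_mul_of_nonneg_left ?_ (abs_nonneg _)
                exact add_le_add (hC x _ (hvnU n x)) (hC x _ (hvU x))
            _ = F x := by rw [hFdef]; ring
        by_cases hb : x ∈ Metric.ball (0 : EuclideanSpace ℝ (Fin d)) (R : ℝ)
        · have hxs : x ∈ s n := ⟨hb, hx⟩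
          rw [Set.indicator_of_mem hxs]
          exact le_add_of_le_of_nonneg hbound (Set.indicator_nonneg (fun y _ => hFnn y) x)
        · rw [Set.indicator_of_mem (Set.mem_compl hb)]
          exact le_add_of_nonneg_of_le (Set.indicator_nonneg (fun y _ => hFnn y) x) hbound
    have hintn := hint (vn n) (hvn n) (hvnU n)
    have hintv := hint v hv hvU
    calc ‖∫ x, (f x * g x (vn n x) - f x * g x (v x))‖
        ≤ ∫ x, ‖f x * g x (vn n x) - f x * g x (v x)‖ := norm_integral_le_integral_norm _
      _ ≤ ∫ x, (Set.indicator (s n) F x +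
            Set.indicator (Metric.ball (0 : EuclideanSpace ℝ (Fin d)) (R : ℝ))ᶜ F x) := by
          refine integral_mono_of_nonneg (Filter.Eventually.of_forall fun x => norm_nonneg _)
            ?_ (Filter.Eventually.of_forall hptw)
          exact (hFint.indicator (hsmeas n)).add
            (hFint.indicator (Metric.isOpen_ball.measurableSet.compl))
      _ = (∫ x in s n, F x) +
            ∫ x in (Metric.ball (0 : EuclideanSpace ℝ (Fin d)) (R : ℝ))ᶜ, F x := by
          rw [integral_add (hFint.indicator (hsmeas n))
            (hFint.indicator (Metric.isOpen_ball.measurableSet.compl)),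
            integral_indicator (hsmeas n),
            integral_indicator (Metric.isOpen_ball.measurableSet.compl)]
      _ < ε / 2 + ε / 2 := add_lt_add hn hRtail
      _ = ε := by ring
  have hintv := hint v hv hvU
  have heq : ∀ n : ℕ, ∫ x, (f x * g x (vn n x) - f x * g x (v x))
      = (∫ x, f x * g x (vn n x)) - ∫ x, f x * g x (v x) := by
    intro n
    exact integral_sub (hint (vn n) (hvn n) (hvnU n)) hintv
  have := main.add_const (∫ x, f x * g x (v x))
  simp only [heq, sub_add_cancel, zero_add] at this
  exact this
end

section
/- Let 𝕌 be a compact convex subset of ℝ^m, let v : ℝ^d → 𝕌 be continuous, and let φ : ℝ^d → ℝ be a nonnegative C^∞ function vanishing outside the unit ball with ∫_{ℝ^d} φ(x) dx = 1, with φ_η(x) := η^{-d} φ(x/η). Then for every f ∈ L¹(ℝ^d) ∩ L²(ℝ^d) and every bounded continuous function g : ℝ^d × 𝕌 → ℝ, one has ∫_{ℝ^d} f(x) g(x, (φ_η * v)(x)) dx → ∫_{ℝ^d} f(x) g(x, v(x)) dx as η → 0. (Mollified policies converge to the original continuous policy in the Borkar topology.) -/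
open MeasureTheory Filter Topology Set

open scoped Convolution NNReal ENNReal

/-- Mollified policies converge to the original continuous policy in the Borkar
topology: with `𝕌 ⊆ ℝ^m` compact convex, `v : ℝ^d → 𝕌` continuous, `φ` a standard
mollifier and `φ_η(x) = η^{-d} φ(x/η)`, one has
`∫ f(x) g(x, (φ_η * v)(x)) dx → ∫ f(x) g(x, v(x)) dx` as `η → 0⁺`, for all
`f ∈ L¹ ∩ L²` and all bounded continuous `g : ℝ^d × 𝕌 → ℝ`. -/
theorem mollified_policies_tendsto_borkar
    (d m : ℕ) (U : Set (EuclideanSpace ℝ (Fin m)))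
    (hUcomp : IsCompact U) (hUconv : Convex ℝ U)
    (v : EuclideanSpace ℝ (Fin d) → EuclideanSpace ℝ (Fin m))
    (hv : Continuous v) (hvU : ∀ x, v x ∈ U)
    (φ : EuclideanSpace ℝ (Fin d) → ℝ)
    (hφsmooth : ContDiff ℝ (⊤ : ℕ∞) φ) (hφnonneg : ∀ x, 0 ≤ φ x)
    (hφsupp : ∀ x : EuclideanSpace ℝ (Fin d), 1 < ‖x‖ → φ x = 0)
    (hφint : ∫ x, φ x = 1) :
    ∀ f : EuclideanSpace ℝ (Fin d) → ℝ,
      Integrable f volume → MemLp f 2 volume →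
      ∀ g : EuclideanSpace ℝ (Fin d) → EuclideanSpace ℝ (Fin m) → ℝ,
        ContinuousOn (fun p : EuclideanSpace ℝ (Fin d) × EuclideanSpace ℝ (Fin m) =>
          g p.1 p.2) (Set.univ ×ˢ U) →
        (∃ C : ℝ, ∀ x, ∀ u ∈ U, |g x u| ≤ C) →
        Tendsto
          (fun η : ℝ => ∫ x, f x * g x (∫ y, ((η ^ d)⁻¹ * φ (η⁻¹ • (x - y))) • v y))
          (𝓝[>] (0 : ℝ)) (𝓝 (∫ x, f x * g x (v x))) := by
  intro f hf hf2 g hg ⟨C, hC⟩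
  have hφcont : Continuous φ := hφsmooth.continuous
  -- the rescaled mollifiers
  set φη : ℝ → EuclideanSpace ℝ (Fin d) → ℝ :=
    fun η x => (η ^ d)⁻¹ * φ (η⁻¹ • x) with hφη_def
  set w : ℝ → EuclideanSpace ℝ (Fin d) → EuclideanSpace ℝ (Fin m) :=
    fun η x => ∫ y, (φη η (x - y)) • v y with hw_def
  have hφηcont : ∀ η, Continuous (φη η) := fun η =>
    continuous_const.mul (hφcont.comp (continuous_const_smul η⁻¹))
  have hφηnonneg : ∀ η, 0 < η → ∀ x, 0 ≤ φη η x := fun η hη x =>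
    mul_nonneg (inv_nonneg.2 (pow_nonneg hη.le _)) (hφnonneg _)
  have hφηsupp : ∀ η, 0 < η → Function.support (φη η) ⊆ Metric.closedBall 0 η := by
    intro η hη x hx
    simp only [Metric.mem_closedBall, dist_zero_right]
    by_contra hc
    push_neg at hc
    have h1 : 1 < ‖η⁻¹ • x‖ := by
      rw [norm_smul, Real.norm_eq_abs, abs_of_pos (inv_pos.2 hη),
        ← inv_mul_cancel₀ hη.ne']
      exact mul_lt_mul_of_pos_left hc (inv_pos.2 hη)
    exact hx (by simp only [hφη_def, hφsupp _ h1, mul_zero])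
  have hφηcompact : ∀ η, 0 < η → HasCompactSupport (φη η) := by
    intro η hη
    exact HasCompactSupport.intro (isCompact_closedBall 0 η)
      (fun x hx => Function.notMem_support.1 (fun h => hx (hφηsupp η hη h)))
  have hfinrank : Module.finrank ℝ (EuclideanSpace ℝ (Fin d)) = d :=
    finrank_euclideanSpace_fin
  have hφηint : ∀ η, 0 < η → ∫ x, φη η x = 1 := by
    intro η hη
    simp only [hφη_def]
    rw [integral_const_mul, Measure.integral_comp_inv_smul_of_nonneg volume φ hη.le,
      hfinrank, smul_eq_mul, hφint, mul_one, inv_mul_cancel₀ (pow_ne_zero _ hη.ne')]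
  -- the translated mollifier has integral one as well
  have hφηint' : ∀ η, 0 < η → ∀ x : EuclideanSpace ℝ (Fin d),
      ∫ y, φη η (x - y) = 1 := by
    intro η hη x
    rw [MeasureTheory.integral_sub_left_eq_self (φη η) volume x]
    exact hφηint η hη
  have hφηintble : ∀ η, 0 < η → Integrable (φη η) :=
    fun η hη => (hφηcont η).integrable_of_hasCompactSupport (hφηcompact η hη)
  -- w is the convolution
  have hweq : ∀ η, w η = (φη η ⋆[ContinuousLinearMap.lsmul ℝ ℝ, volume] v) := by
    intro η
    funext x
    rw [hw_def]
    simp only [convolution_def, ContinuousLinearMap.lsmul_apply]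
    rw [← MeasureTheory.integral_sub_left_eq_self
      (fun y => (φη η (x - y)) • v y) volume x]
    simp [sub_sub_cancel]
  -- v is bounded
  obtain ⟨Cv, hCv⟩ := hUcomp.isBounded.subset_closedBall 0
  have hvbound : ∀ x, ‖v x‖ ≤ Cv := by
    intro x
    simpa [dist_zero_right] using hCv (hvU x)
  have hvloc : LocallyIntegrable v volume := hv.locallyIntegrable
  -- membership of mollified values in U
  have hmem : ∀ η, 0 < η → ∀ x, w η x ∈ U := by
    intro η hη x
    set c : EuclideanSpace ℝ (Fin d) → ℝ≥0 :=
      fun y => Real.toNNReal (φη η (x - y)) with hc_def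
    have hc_meas : Measurable c :=
      ((hφηcont η).comp (continuous_const.sub continuous_id)).measurable.real_toNNReal
    set μ' : Measure (EuclideanSpace ℝ (Fin d)) :=
      volume.withDensity (fun y => (c y : ℝ≥0∞)) with hμ'_def
    have hint_transl : Integrable (fun y => φη η (x - y)) volume := by
      simpa using (hφηintble η hη).comp_sub_left x
    have hprob : IsProbabilityMeasure μ' := by
      constructor
      rw [hμ'_def, withDensity_apply _ MeasurableSet.univ, setLIntegral_univ]
      have hco : ∀ y, ((c y : ℝ≥0) : ℝ≥0∞) = ENNReal.ofReal (φη η (x - y)) := fun y => rfl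
      simp_rw [hco]
      rw [← MeasureTheory.ofReal_integral_eq_lintegral_ofReal hint_transl
        (Filter.Eventually.of_forall (fun y => hφηnonneg η hη _)),
        hφηint' η hη x]
      simp
    have hveq : ∫ y, v y ∂μ' = w η x := by
      rw [hμ'_def, integral_withDensity_eq_integral_smul hc_meas v, hw_def]
      congr 1
      funext y
      rw [NNReal.smul_def, Real.coe_toNNReal _ (hφηnonneg η hη _)]
    rw [← hveq]
    refine hUconv.integral_mem hUcomp.isClosed
      (Filter.Eventually.of_forall (fun y => hvU y)) ?_
    exact ⟨hv.aestronglyMeasurable,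
      HasFiniteIntegral.of_bounded (C := Cv) (Filter.Eventually.of_forall hvbound)⟩
  -- continuity of w η
  have hwcont : ∀ η, 0 < η → Continuous (w η) := by
    intro η hη
    rw [hweq η]
    exact (hφηcompact η hη).continuous_convolution_left _ (hφηcont η) hvloc
  -- pointwise convergence of the mollification
  have hptwise : ∀ x, Tendsto (fun η => w η x) (𝓝[>] (0 : ℝ)) (𝓝 (v x)) := by
    intro x
    have heq : (fun η => w η x) =
        fun η => (φη η ⋆[ContinuousLinearMap.lsmul ℝ ℝ, volume] v) x := by
      funext η; rw [hweq η]
    rw [heq]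
    refine MeasureTheory.convolution_tendsto_right (l := 𝓝[>] (0 : ℝ))
      (g := fun _ => v) (k := fun _ => x)
      ?_ ?_ ?_ ?_ ?_ tendsto_const_nhds
    · filter_upwards [self_mem_nhdsWithin] with η hη
      exact hφηnonneg η hη
    · filter_upwards [self_mem_nhdsWithin] with η hη
      exact hφηint η hη
    · rw [tendsto_smallSets_iff]
      intro s hs
      obtain ⟨ε, hε, hball⟩ := Metric.mem_nhds_iff.1 hs
      filter_upwards [Ioo_mem_nhdsGT_of_mem ⟨le_refl (0:ℝ), half_pos hε⟩] with η hη
      refine (hφηsupp η hη.1).trans ?_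
      refine (Metric.closedBall_subset_ball ?_).trans hball
      exact lt_of_le_of_lt hη.2.le (half_lt_self hε)
    · filter_upwards with η
      exact hv.aestronglyMeasurable
    · exact (hv.tendsto x).comp tendsto_snd
  -- C is nonneg
  have hC0 : 0 ≤ C := le_trans (abs_nonneg _) (hC 0 (v 0) (hvU 0))
  -- dominated convergence
  refine tendsto_integral_filter_of_dominated_convergence (fun x => |f x| * C) ?_ ?_ ?_ ?_
  · filter_upwards [self_mem_nhdsWithin] with η hη
    have hgw : Continuous fun x => g x (w η x) := by
      have hpair : Continuous fun x : EuclideanSpace ℝ (Fin d) =>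
          ((x, w η x) : EuclideanSpace ℝ (Fin d) × EuclideanSpace ℝ (Fin m)) :=
        continuous_id.prodMk (hwcont η hη)
      exact hg.comp_continuous hpair (fun x => ⟨mem_univ _, hmem η hη x⟩)
    exact hf.aestronglyMeasurable.mul hgw.aestronglyMeasurable
  · filter_upwards [self_mem_nhdsWithin] with η hη
    filter_upwards with x
    rw [Real.norm_eq_abs, abs_mul]
    exact mul_le_mul_of_nonneg_left (hC x _ (hmem η hη x)) (abs_nonneg _)
  · exact hf.abs.mul_const C
  · filter_upwards with x
    refine Tendsto.const_mul (f x) ?_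
    have hcw : ContinuousWithinAt
        (fun p : EuclideanSpace ℝ (Fin d) × EuclideanSpace ℝ (Fin m) => g p.1 p.2)
        (Set.univ ×ˢ U) (x, v x) :=
      hg _ ⟨mem_univ _, hvU x⟩
    have hpair : Tendsto
        (fun η => ((x, w η x) : EuclideanSpace ℝ (Fin d) × EuclideanSpace ℝ (Fin m)))
        (𝓝[>] (0 : ℝ)) (𝓝[Set.univ ×ˢ U] (x, v x)) := by
      rw [tendsto_nhdsWithin_iff]
      constructor
      · exact tendsto_const_nhds.prodMk_nhds (hptwise x)
      · filter_upwards [self_mem_nhdsWithin] with η hη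
        exact ⟨mem_univ _, hmem η hη x⟩
    exact hcw.tendsto.comp hpair
end

section
/- Let 𝕌 be a compact convex subset of ℝ^m and let v : [0, ∞) × ℝ^d → 𝕌 be a Borel measurable map (a deterministic Markov policy). Then there exists a sequence of Lipschitz continuous maps w_k : [0, ∞) × ℝ^d → 𝕌 such that for every f ∈ L¹([0, ∞) × ℝ^d) ∩ L²([0, ∞) × ℝ^d) and every bounded continuous function g : [0, ∞) × ℝ^d × 𝕌 → ℝ, one has ∫_0^∞ ∫_{ℝ^d} f(t, x) g(t, x, w_k(t, x)) dx dt → ∫_0^∞ ∫_{ℝ^d} f(t, x) g(t, x, v(t, x)) dx dt as k → ∞. (Denseness of Lipschitz Markov policies in the Borkar topology on Markov policies.) -/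
open MeasureTheory Filter Topology Set
set_option maxSynthPendingDepth 3
open scoped Convolution ENNReal NNReal

namespace BorkarAux

open ContinuousLinearMap

/-- Bounded measurable functions are locally integrable. -/
lemma locallyIntegrable_of_bounded {n m : ℕ}
    {V : EuclideanSpace ℝ (Fin n) → EuclideanSpace ℝ (Fin m)}
    (hV : Measurable V) {B : ℝ} (hB : ∀ x, ‖V x‖ ≤ B) :
    LocallyIntegrable V volume := by
  intro x
  refine ⟨Metric.closedBall x 1, Metric.closedBall_mem_nhds x one_pos, ?_⟩
  exact Measure.integrableOn_of_bounded (measure_closedBall_lt_top).ne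
    hV.aestronglyMeasurable (Eventually.of_forall fun y => hB y)

/-- The convolution of a normed bump function with a bounded measurable function is
Lipschitz. -/
lemma lipschitz_conv {n m : ℕ} (φ : ContDiffBump (0 : EuclideanSpace ℝ (Fin n)))
    {V : EuclideanSpace ℝ (Fin n) → EuclideanSpace ℝ (Fin m)}
    (hV : Measurable V) {B : ℝ} (hB : ∀ x, ‖V x‖ ≤ B) :
    ∃ K : ℝ≥0, LipschitzWith K (φ.normed volume ⋆[lsmul ℝ ℝ, volume] V) := by
  have hB0 : 0 ≤ B := le_trans (norm_nonneg _) (hB 0)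
  set f := φ.normed (volume : Measure (EuclideanSpace ℝ (Fin n))) with hf
  have hf1 : ContDiff ℝ 1 f := φ.contDiff_normed
  have hfc : HasCompactSupport f := φ.hasCompactSupport_normed
  have hVloc : LocallyIntegrable V volume := locallyIntegrable_of_bounded hV hB
  set D : EuclideanSpace ℝ (Fin n) → EuclideanSpace ℝ (Fin n) →L[ℝ] EuclideanSpace ℝ (Fin m) :=
    fun x => (fderiv ℝ f ⋆[(lsmul ℝ ℝ : ℝ →L[ℝ] EuclideanSpace ℝ (Fin m) →L[ℝ]
      EuclideanSpace ℝ (Fin m)).precompL (EuclideanSpace ℝ (Fin n)), volume] V) x with hD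
  have hder : ∀ x, HasFDerivAt (f ⋆[lsmul ℝ ℝ, volume] V) (D x) x :=
    fun x => hfc.hasFDerivAt_convolution_left _ hf1 hVloc x
  have hdf_cont : Continuous (fderiv ℝ f) := hf1.continuous_fderiv one_ne_zero
  have hdf_supp : HasCompactSupport (fderiv ℝ f) := hfc.fderiv ℝ
  have hint : Integrable (fun t => ‖fderiv ℝ f t‖ * B) volume :=
    (hdf_cont.norm.integrable_of_hasCompactSupport hdf_supp.norm).mul_const B
  set C0 : ℝ := ∫ t, ‖fderiv ℝ f t‖ * B
  have hDb : ∀ x, ‖D x‖ ≤ C0 := by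
    intro x
    simp only [hD]
    rw [convolution_def]
    refine norm_integral_le_of_norm_le hint (Eventually.of_forall fun t => ?_)
    calc ‖((lsmul ℝ ℝ : ℝ →L[ℝ] EuclideanSpace ℝ (Fin m) →L[ℝ]
        EuclideanSpace ℝ (Fin m)).precompL (EuclideanSpace ℝ (Fin n)) (fderiv ℝ f t)) (V (x - t))‖
        ≤ ‖(lsmul ℝ ℝ : ℝ →L[ℝ] EuclideanSpace ℝ (Fin m) →L[ℝ]
            EuclideanSpace ℝ (Fin m)).precompL (EuclideanSpace ℝ (Fin n))‖ * ‖fderiv ℝ f t‖ * ‖V (x - t)‖ :=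
          le_opNorm₂ _ _ _
      _ ≤ 1 * ‖fderiv ℝ f t‖ * B := by
          refine mul_le_mul ?_ (hB _) (norm_nonneg _) (by positivity)
          refine mul_le_mul_of_nonneg_right ?_ (norm_nonneg _)
          exact le_trans (norm_precompL_le _ _) (opNorm_lsmul_le)
      _ = ‖fderiv ℝ f t‖ * B := by ring
  refine ⟨C0.toNNReal, ?_⟩
  rw [← lipschitzOnWith_univ]
  refine Convex.lipschitzOnWith_of_nnnorm_hasFDerivWithin_le (f' := D)
    (fun x _ => (hder x).hasFDerivWithinAt) (fun x _ => ?_) convex_univ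
  rw [← norm_toNNReal]
  exact Real.toNNReal_mono (hDb x)

/-- The convolution of a normed bump with a function taking values in a closed convex
bounded set takes values in that set. -/
lemma conv_mem {n m : ℕ} (φ : ContDiffBump (0 : EuclideanSpace ℝ (Fin n)))
    {U : Set (EuclideanSpace ℝ (Fin m))} (hUconv : Convex ℝ U) (hUcl : IsClosed U)
    {V : EuclideanSpace ℝ (Fin n) → EuclideanSpace ℝ (Fin m)}
    (hV : Measurable V) {B : ℝ} (hB : ∀ x, ‖V x‖ ≤ B) (hVU : ∀ x, V x ∈ U)
    (x : EuclideanSpace ℝ (Fin n)) :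
    (φ.normed volume ⋆[lsmul ℝ ℝ, volume] V) x ∈ U := by
  have hφm : Measurable (φ.normed (volume : Measure (EuclideanSpace ℝ (Fin n)))) :=
    φ.continuous_normed.measurable
  set ρ : EuclideanSpace ℝ (Fin n) → ℝ≥0 := fun t => (φ.normed volume t).toNNReal with hρdef
  have hρ : Measurable ρ := hφm.real_toNNReal
  set μx : Measure (EuclideanSpace ℝ (Fin n)) := volume.withDensity fun t => (ρ t : ℝ≥0∞) with hμx
  have hcoe : (fun t => ((ρ t : ℝ≥0) : ℝ≥0∞)) = fun t => ENNReal.ofReal (φ.normed volume t) :=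
    rfl
  haveI : IsProbabilityMeasure μx := by
    constructor
    rw [hμx, withDensity_apply _ MeasurableSet.univ, Measure.restrict_univ, hcoe,
      ← ofReal_integral_eq_lintegral_ofReal φ.integrable_normed
        (Eventually.of_forall φ.nonneg_normed), φ.integral_normed]
    simp
  have hmain : (φ.normed volume ⋆[lsmul ℝ ℝ, volume] V) x = ∫ t, V (x - t) ∂μx := by
    rw [convolution_def, hμx, integral_withDensity_eq_integral_smul hρ]
    congr 1
    funext t
    rw [lsmul_apply, NNReal.smul_def, hρdef, Real.coe_toNNReal _ (φ.nonneg_normed t)]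
  rw [hmain]
  have hmeas : AEStronglyMeasurable (fun t => V (x - t)) μx :=
    (hV.comp (measurable_const.sub measurable_id)).aestronglyMeasurable
  refine hUconv.integral_mem hUcl (Eventually.of_forall fun t => hVU _) ?_
  exact (memLp_top_of_bound hmeas B (Eventually.of_forall fun t => hB _)).integrable le_top

/-- The linear equivalence between `ℝ × (Fin d → ℝ)` and `Fin (d+1) → ℝ` given by `Fin.cons`. -/
noncomputable def finConsLinearEquiv (d : ℕ) : (ℝ × (Fin d → ℝ)) ≃ₗ[ℝ] (Fin (d+1) → ℝ) where
  toFun a := Fin.cons a.1 a.2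
  invFun f := (f 0, fun j => f j.succ)
  map_add' a b := by
    funext i
    refine Fin.cases ?_ ?_ i <;> simp
  map_smul' c a := by
    funext i
    refine Fin.cases ?_ ?_ i <;> simp
  left_inv a := by simp
  right_inv f := by
    funext i
    refine Fin.cases ?_ ?_ i <;> simp

end BorkarAux

open BorkarAux ContinuousLinearMap

/-- Denseness of Lipschitz deterministic Markov policies in the Borkar topology on
Markov policies. -/
theorem lipschitz_markov_policies_dense_borkar
    (d m : ℕ) (U : Set (EuclideanSpace ℝ (Fin m)))
    (hUcomp : IsCompact U) (hUconv : Convex ℝ U)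
    (v : ℝ × EuclideanSpace ℝ (Fin d) → EuclideanSpace ℝ (Fin m))
    (hv : Measurable v)
    (hvU : ∀ p ∈ (Set.Ici (0 : ℝ) ×ˢ (Set.univ : Set (EuclideanSpace ℝ (Fin d)))),
      v p ∈ U) :
    ∃ w : ℕ → ℝ × EuclideanSpace ℝ (Fin d) → EuclideanSpace ℝ (Fin m),
      (∀ k, ∃ K : NNReal, LipschitzOnWith K (w k)
        (Set.Ici (0 : ℝ) ×ˢ (Set.univ : Set (EuclideanSpace ℝ (Fin d))))) ∧
      (∀ k, ∀ p ∈ (Set.Ici (0 : ℝ) ×ˢ (Set.univ : Set (EuclideanSpace ℝ (Fin d)))),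
        w k p ∈ U) ∧
      (∀ f : ℝ × EuclideanSpace ℝ (Fin d) → ℝ,
        Integrable f ((volume.restrict (Set.Ici (0 : ℝ))).prod volume) →
        MemLp f 2 ((volume.restrict (Set.Ici (0 : ℝ))).prod volume) →
        ∀ g : ℝ → EuclideanSpace ℝ (Fin d) → EuclideanSpace ℝ (Fin m) → ℝ,
          ContinuousOn
            (fun q : (ℝ × EuclideanSpace ℝ (Fin d)) × EuclideanSpace ℝ (Fin m) =>
              g q.1.1 q.1.2 q.2)
            ((Set.Ici (0 : ℝ) ×ˢ (Set.univ : Set (EuclideanSpace ℝ (Fin d)))) ×ˢ U) →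
          (∃ C : ℝ, ∀ (t : ℝ) (x : EuclideanSpace ℝ (Fin d)) (u : EuclideanSpace ℝ (Fin m)),
            0 ≤ t → u ∈ U → |g t x u| ≤ C) →
          Tendsto
            (fun k => ∫ p, f p * g p.1 p.2 (w k p)
              ∂((volume.restrict (Set.Ici (0 : ℝ))).prod volume))
            atTop
            (𝓝 (∫ p, f p * g p.1 p.2 (v p)
              ∂((volume.restrict (Set.Ici (0 : ℝ))).prod volume)))) := by
  classical
  set S : Set (ℝ × EuclideanSpace ℝ (Fin d)) :=
    Set.Ici (0 : ℝ) ×ˢ (Set.univ : Set (EuclideanSpace ℝ (Fin d))) with hSdef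
  have hSmeas : MeasurableSet S := measurableSet_Ici.prod MeasurableSet.univ
  obtain ⟨u₀, hu₀⟩ : ∃ u₀, u₀ ∈ U := ⟨v (0, 0), hvU _ ⟨self_mem_Ici, mem_univ _⟩⟩
  obtain ⟨B, hBU⟩ : ∃ B, ∀ u ∈ U, ‖u‖ ≤ B := hUcomp.isBounded.exists_norm_le
  -- modify `v` outside of `S` so it takes values in `U` everywhere
  set v' : ℝ × EuclideanSpace ℝ (Fin d) → EuclideanSpace ℝ (Fin m) :=
    fun p => if 0 ≤ p.1 then v p else u₀ with hv'def
  have hv' : Measurable v' :=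
    Measurable.ite (measurableSet_le measurable_const measurable_fst) hv measurable_const
  have hv'U : ∀ p, v' p ∈ U := by
    intro p
    by_cases h : 0 ≤ p.1
    · simpa [hv'def, h] using hvU p ⟨h, mem_univ _⟩
    · simpa [hv'def, h] using hu₀
  have hv'B : ∀ p, ‖v' p‖ ≤ B := fun p => hBU _ (hv'U p)
  have hv'v : ∀ p ∈ S, v' p = v p := fun p hp => if_pos hp.1
  -- the continuous linear equivalence between `ℝ × ℝ^d` and `ℝ^(d+1)`
  let e₁ : (ℝ × EuclideanSpace ℝ (Fin d)) ≃ₗ[ℝ] (ℝ × (Fin d → ℝ)) :=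
    (LinearEquiv.refl ℝ ℝ).prodCongr (WithLp.linearEquiv 2 ℝ (Fin d → ℝ))
  let e₃ : (Fin (d+1) → ℝ) ≃ₗ[ℝ] EuclideanSpace ℝ (Fin (d+1)) :=
    (WithLp.linearEquiv 2 ℝ (Fin (d+1) → ℝ)).symm
  let L : (ℝ × EuclideanSpace ℝ (Fin d)) ≃L[ℝ] EuclideanSpace ℝ (Fin (d+1)) :=
    (e₁ ≪≫ₗ finConsLinearEquiv d ≪≫ₗ e₃).toContinuousLinearEquiv
  set V : EuclideanSpace ℝ (Fin (d+1)) → EuclideanSpace ℝ (Fin m) :=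
    fun y => v' (L.symm y) with hVdef
  have hVmeas : Measurable V := hv'.comp L.symm.continuous.measurable
  have hVB : ∀ y, ‖V y‖ ≤ B := fun y => hv'B _
  have hVU : ∀ y, V y ∈ U := fun y => hv'U _
  -- the bump functions
  let φ : ℕ → ContDiffBump (0 : EuclideanSpace ℝ (Fin (d+1))) :=
    fun k => ⟨((k : ℝ)+1)⁻¹, 2*((k : ℝ)+1)⁻¹, by positivity, by
      have : (0:ℝ) < ((k : ℝ)+1)⁻¹ := by positivity
      linarith⟩
  have hφr : Tendsto (fun k => (φ k).rOut) atTop (𝓝 0) := by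
    have h1 : Tendsto (fun k : ℕ => ((k : ℝ)+1)⁻¹) atTop (𝓝 0) := by
      simpa [one_div] using tendsto_one_div_add_atTop_nhds_zero_nat (𝕜 := ℝ)
    have := h1.const_mul (2 : ℝ)
    simpa using this
  set w' : ℕ → EuclideanSpace ℝ (Fin (d+1)) → EuclideanSpace ℝ (Fin m) :=
    fun k => (φ k).normed volume ⋆[lsmul ℝ ℝ, volume] V with hw'def
  -- almost everywhere convergence of w' to V
  have hae : ∀ᵐ y ∂(volume : Measure (EuclideanSpace ℝ (Fin (d+1)))),
      Tendsto (fun k => w' k y) atTop (𝓝 (V y)) :=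
    ContDiffBump.ae_convolution_tendsto_right_of_locallyIntegrable (K := 2) hφr
      (Eventually.of_forall fun k => le_of_eq rfl)
      (locallyIntegrable_of_bounded hVmeas hVB)
  -- transfer through L
  haveI hGhaar : (volume : Measure (ℝ × EuclideanSpace ℝ (Fin d))).IsAddHaarMeasure := by
    rw [Measure.volume_eq_prod]; infer_instance
  have hqmp : Measure.QuasiMeasurePreserving L volume volume := by
    refine ⟨L.continuous.measurable, ?_⟩
    haveI : ((volume : Measure (ℝ × EuclideanSpace ℝ (Fin d))).map L).IsAddHaarMeasure :=
      L.isAddHaarMeasure_map volume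
    exact Measure.absolutelyContinuous_isAddHaarMeasure _ _
  set w : ℕ → ℝ × EuclideanSpace ℝ (Fin d) → EuclideanSpace ℝ (Fin m) :=
    fun k p => w' k (L p) with hwdef
  have haeG : ∀ᵐ p ∂(volume : Measure (ℝ × EuclideanSpace ℝ (Fin d))),
      Tendsto (fun k => w k p) atTop (𝓝 (v' p)) := by
    filter_upwards [hqmp.ae hae] with p hp
    have : V (L p) = v' p := by rw [hVdef]; simp
    rw [hwdef]
    simpa [this] using hp
  have hwlip : ∀ k, ∃ K : ℝ≥0, LipschitzWith K (w k) := by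
    intro k
    obtain ⟨K, hK⟩ := lipschitz_conv (φ k) hVmeas hVB
    exact ⟨K * ‖(L : (ℝ × EuclideanSpace ℝ (Fin d)) →L[ℝ]
      EuclideanSpace ℝ (Fin (d+1)))‖₊,
      hK.comp (L : (ℝ × EuclideanSpace ℝ (Fin d)) →L[ℝ]
        EuclideanSpace ℝ (Fin (d+1))).lipschitz⟩
  have hwU : ∀ k p, w k p ∈ U := fun k p =>
    conv_mem (φ k) hUconv hUcomp.isClosed hVmeas hVB hVU _
  have hwcont : ∀ k, Continuous (w k) := fun k => ((hwlip k).choose_spec).continuous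
  refine ⟨w, ?_, ?_, ?_⟩
  · intro k
    obtain ⟨K, hK⟩ := hwlip k
    exact ⟨K, fun x _ y _ => hK x y⟩
  · intro k p _
    exact hwU k p
  · intro f hfInt hf2 g hg hgb
    obtain ⟨C, hC⟩ := hgb
    set ν : Measure (ℝ × EuclideanSpace ℝ (Fin d)) :=
      ((volume.restrict (Set.Ici (0 : ℝ))).prod volume) with hνdef
    have hνeq : ν = (volume : Measure (ℝ × EuclideanSpace ℝ (Fin d))).restrict S := by
      rw [hνdef, Measure.volume_eq_prod, hSdef, ← Measure.prod_restrict, Measure.restrict_univ]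
    have haeS : ∀ᵐ p ∂ν, p ∈ S := by
      rw [hνeq]; exact ae_restrict_mem hSmeas
    have haeT : ∀ᵐ p ∂ν, Tendsto (fun k => w k p) atTop (𝓝 (v' p)) := by
      rw [hνeq]; exact ae_restrict_of_ae haeG
    refine tendsto_integral_of_dominated_convergence (fun p => C * |f p|) ?_ ?_ ?_ ?_
    · intro k
      have hmap : ContinuousOn (fun p : ℝ × EuclideanSpace ℝ (Fin d) => (p, w k p)) S :=
        (continuous_id.prodMk (hwcont k)).continuousOn
      have hgk : ContinuousOn (fun p : ℝ × EuclideanSpace ℝ (Fin d) =>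
          g p.1 p.2 (w k p)) S := by
        refine hg.comp hmap ?_
        intro p hp
        exact ⟨hp, hwU k p⟩
      have := hgk.aestronglyMeasurable (μ := (volume : Measure (ℝ × EuclideanSpace ℝ (Fin d)))) hSmeas
      rw [← hνeq] at this
      exact hfInt.aestronglyMeasurable.mul this
    · exact hfInt.abs.const_mul C
    · intro k
      filter_upwards [haeS] with p hp
      have h1 : |g p.1 p.2 (w k p)| ≤ C := hC p.1 p.2 _ hp.1 (hwU k p)
      calc ‖f p * g p.1 p.2 (w k p)‖ = |f p| * |g p.1 p.2 (w k p)| := by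
            rw [Real.norm_eq_abs, abs_mul]
        _ ≤ |f p| * C := mul_le_mul_of_nonneg_left h1 (abs_nonneg _)
        _ = C * |f p| := mul_comm _ _
    · filter_upwards [haeS, haeT] with p hpS hpT
      have hvv : v' p = v p := hv'v p hpS
      rw [hvv] at hpT
      have hgc : ContinuousWithinAt
          (fun q : (ℝ × EuclideanSpace ℝ (Fin d)) × EuclideanSpace ℝ (Fin m) =>
            g q.1.1 q.1.2 q.2) (S ×ˢ U) (p, v p) :=
        hg _ ⟨hpS, hvU p hpS⟩
      have h1 : Tendsto (fun k => ((p, w k p) :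
          (ℝ × EuclideanSpace ℝ (Fin d)) × EuclideanSpace ℝ (Fin m))) atTop
          (𝓝[S ×ˢ U] (p, v p)) := by
        rw [tendsto_nhdsWithin_iff]
        exact ⟨tendsto_const_nhds.prodMk_nhds hpT,
          Eventually.of_forall fun k => ⟨hpS, hwU k p⟩⟩
      have h2 := hgc.tendsto.comp h1
      exact tendsto_const_nhds.mul h2
end
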